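/- Let m, n be positive integers with k+1 ≤ n, and let F be a {0,1}-valued m×n matrix arising as a rounding (consistent with all initial row and column sums, error < 1) of the matrix T with constant rows s_i/n where s_i ∈ {k, k+1} and k+1 ≤ n/2. Let N_i(d) denote the column of the d-th zero in row i (with wraparound across rows). Then for all rows r, s and integers d, e ≥ 0: N_r(d+e) - N_s(d) ≤ 2e + 4. -/

import Mathlib

/-!
Row `i` of `T` is constant `s i / n`, so the row condition says that the number of zeros among
the first `c` entries of row `i` stays within `1` of `c * p i`, where `p i = 1 - s i / n ≥ 1/2` is
the density of zeros. Hence the `D`-th zero of row `i` sits at roughly `D / p i`: the `(d + e)`-th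
zero of row `r` lies at most at `1 + (d + e) / p r`, the `d`-th zero of row `s'` at least at
`(d - 1) / p s'`. Since `p r, p s' ≥ 1/2`, `|p r - p s'| ≤ 1/n` and `d ≤ n * p r`, the difference
is below `2e + 5`, and it is an integer.
-/

open Finset

noncomputable def zeroCount (f : ℕ → ℝ) (c : ℕ) : ℕ := ((Icc 1 c).filter (fun j => f j = 0)).card

section ZeroCount

variable {f : ℕ → ℝ}

lemma zeroCount_succ_of_eq_zero {c : ℕ} (h : f (c + 1) = 0) :
    zeroCount f (c + 1) = zeroCount f c + 1 := by
  simp only [zeroCount, card_filter]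
  rw [sum_Icc_succ_top (by omega), if_pos h]

lemma sum_Icc_sub_eq_zeroCount_sub {g : ℕ → ℝ} {t : ℝ} {c : ℕ} (hf01 : ∀ j, f j = 0 ∨ f j = 1)
    (hg : ∀ j ∈ Icc 1 c, g j = t) :
    ∑ j ∈ Icc 1 c, (g j - f j) = zeroCount f c - c * (1 - t) := by
  have hterm : ∀ j ∈ Icc 1 c, g j - f j = (if f j = 0 then 1 else 0) - (1 - t) := by
    intro j hj
    rcases hf01 j with h | h <;> simp [h, hg j hj]
  rw [sum_congr rfl hterm]
  simp only [sum_sub_distrib, sum_boole, sum_const, Nat.card_Icc, zeroCount, nsmul_eq_mul]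
  push_cast
  ring

lemma pred_mul_lt_of_zeroCount_eq {n : ℕ} {p : ℝ}
    (hdisc : ∀ c, 1 ≤ c → c ≤ n → |(zeroCount f c : ℝ) - c * p| < 1)
    {a D : ℕ} (ha : 1 ≤ a) (han : a ≤ n) (hfa : f a = 0) (hD : zeroCount f a = D) :
    ((a : ℝ) - 1) * p < D := by
  obtain ⟨c, rfl⟩ : ∃ c, a = c + 1 := ⟨a - 1, by omega⟩
  have hc : (c : ℝ) * p < zeroCount f c + 1 := by
    rcases Nat.eq_zero_or_pos c with rfl | hc
    · simp only [CharP.cast_eq_zero, zero_mul]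
      positivity
    · linarith [(abs_lt.mp (hdisc c hc (by omega))).1]
  rw [← hD, zeroCount_succ_of_eq_zero hfa]
  push_cast
  simpa using hc

lemma sub_one_lt_mul_of_zeroCount_eq {n : ℕ} {p : ℝ}
    (hdisc : ∀ c, 1 ≤ c → c ≤ n → |(zeroCount f c : ℝ) - c * p| < 1)
    {b D : ℕ} (hb : 1 ≤ b) (hbn : b ≤ n) (hD : zeroCount f b = D) :
    (D : ℝ) - 1 < b * p := by
  linarith [hD ▸ (abs_lt.mp (hdisc b hb hbn)).2]

end ZeroCount

lemma sub_lt_of_zero_densities {n p q a b d e : ℝ} (hn : 0 < n) (hp : n ≤ 2 * (n * p))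
    (hq : n ≤ 2 * (n * q)) (hqp : n * q ≤ n * p + 1) (hd : 0 ≤ d) (he : 0 ≤ e) (hde : d + e ≤ n * p)
    (ha : (a - 1) * p < d + e) (hb : d - 1 < b * q) :
    a - b < 2 * e + 5 := by
  have hp1 : 1 ≤ 2 * p := le_of_mul_le_mul_left (by linarith) hn
  have hq1 : 1 ≤ 2 * q := le_of_mul_le_mul_left (by linarith) hn
  have hp0 : 0 < p := by linarith
  have hq0 : 0 < q := by linarith
  have hdrift : d * (q - p) ≤ p := by
    refine le_of_mul_le_mul_left ?_ hn
    nlinarith [mul_nonneg hd (by linarith : 0 ≤ n * p + 1 - n * q)]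
  have hpq : (a - 1 - b) * (p * q) < (2 * e + 4) * (p * q) := by
    calc (a - 1 - b) * (p * q) = (a - 1) * p * q - b * q * p := by ring
      _ < (d + e) * q - (d - 1) * p := by gcongr
      _ = e * q + d * (q - p) + p := by ring
      _ ≤ (2 * e + 4) * (p * q) := by
        nlinarith [mul_nonneg (mul_nonneg he hq0.le) (by linarith : 0 ≤ 2 * p - 1),
          mul_nonneg hp0.le (by linarith : 0 ≤ 2 * q - 1)]
  linarith [lt_of_mul_lt_mul_right hpq (mul_pos hp0 hq0).le]

theorem stmt17_general (m n k : ℕ) (hkn : 2 * (k + 1) ≤ n)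
    (s : ℕ → ℕ) (hs : ∀ i, 1 ≤ i → i ≤ m → s i = k ∨ s i = k + 1)
    (T F : ℕ → ℕ → ℝ)
    (hT : ∀ i j, 1 ≤ i → i ≤ m → 1 ≤ j → j ≤ n → T i j = (s i : ℝ) / (n : ℝ))
    (hF01 : ∀ i j, F i j = 0 ∨ F i j = 1)
    (hrow : ∀ i, 1 ≤ i → i ≤ m → ∀ b : ℕ, 1 ≤ b → b ≤ n →
      |∑ j ∈ Finset.Icc 1 b, (T i j - F i j)| < 1)
    (N : ℕ → ℕ → ℕ)
    (hN : ∀ i d, 1 ≤ i → i ≤ m → 1 ≤ d → d ≤ n - s i →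
      1 ≤ N i d ∧ N i d ≤ n ∧ F i (N i d) = 0 ∧
      ((Finset.Icc 1 (N i d)).filter (fun j => F i j = 0)).card = d)
    (r s' d e : ℕ) (hr1 : 1 ≤ r) (hrm : r ≤ m) (hs1 : 1 ≤ s') (hsm : s' ≤ m)
    (hd : 1 ≤ d) (hde : d + e ≤ n - s r) (hd2 : d ≤ n - s s') :
    (N r (d + e) : ℤ) - (N s' d : ℤ) ≤ 2 * e + 4 := by
  have hn : (0 : ℝ) < n := by exact_mod_cast (by omega : 0 < n)
  have hdisc : ∀ i, 1 ≤ i → i ≤ m → ∀ c, 1 ≤ c → c ≤ n →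
      |(zeroCount (F i) c : ℝ) - c * (1 - s i / n)| < 1 := fun i hi1 him c hc1 hcn => by
    rw [← sum_Icc_sub_eq_zeroCount_sub (hF01 i) fun j hj =>
      hT i j hi1 him (mem_Icc.mp hj).1 ((mem_Icc.mp hj).2.trans hcn)]
    exact hrow i hi1 him c hc1 hcn
  obtain ⟨ha1, han, hFa, hcard_a⟩ := hN r (d + e) hr1 hrm (by omega) hde
  obtain ⟨hb1, hbn, -, hcard_b⟩ := hN s' d hs1 hsm hd hd2
  have ha := pred_mul_lt_of_zeroCount_eq (hdisc r hr1 hrm) ha1 han hFa hcard_a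
  have hb := sub_one_lt_mul_of_zeroCount_eq (hdisc s' hs1 hsm) hb1 hbn hcard_b
  have hsizes : 2 * s r ≤ n ∧ 2 * s s' ≤ n ∧ s r ≤ s s' + 1 ∧ d + e + s r ≤ n := by
    rcases hs r hr1 hrm with h | h <;> rcases hs s' hs1 hsm with h' | h' <;> omega
  have hsizesR : (2 * s r : ℝ) ≤ n ∧ (2 * s s' : ℝ) ≤ n ∧ (s r : ℝ) ≤ s s' + 1 ∧
      (d + e + s r : ℝ) ≤ n := by exact_mod_cast hsizes
  have hdens : ∀ i, (n : ℝ) * (1 - s i / n) = n - s i := fun i => by field_simp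
  have hgap : ((N r (d + e) : ℤ) - N s' d : ℝ) < 2 * e + 5 := by
    push_cast at ha ⊢
    refine sub_lt_of_zero_densities hn ?_ ?_ ?_ (by positivity) (by positivity) ?_ ha hb <;>
      simp only [hdens] <;> linarith
  have : (N r (d + e) : ℤ) - N s' d < 2 * e + 5 := by exact_mod_cast hgap
  omega

/-- Corollary 4.5(c): for a {0,1}-valued rounding F (consistent with all initial row and
column sums, error < 1) of the matrix T with constant rows s_i/n, s_i ∈ {k, k+1},
k+1 ≤ n/2, letting N_i(d) be the column of the d-th zero of row i, the column of the
(d+e)-th zero of row r exceeds the column of the d-th zero of row s by at most 2e+4. -/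
theorem stmt17 (m n k : ℕ) (hm : 0 < m) (hkn : 2 * (k + 1) ≤ n)
    (s : ℕ → ℕ) (hs : ∀ i, 1 ≤ i → i ≤ m → s i = k ∨ s i = k + 1)
    (T F : ℕ → ℕ → ℝ)
    (hT : ∀ i j, 1 ≤ i → i ≤ m → 1 ≤ j → j ≤ n → T i j = (s i : ℝ) / (n : ℝ))
    (hF01 : ∀ i j, F i j = 0 ∨ F i j = 1)
    (hround : ∀ i j, F i j = (⌊T i j⌋ : ℝ) ∨ F i j = (⌈T i j⌉ : ℝ))
    (hrow : ∀ i, 1 ≤ i → i ≤ m → ∀ b : ℕ, 1 ≤ b → b ≤ n →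
      |∑ j ∈ Finset.Icc 1 b, (T i j - F i j)| < 1)
    (hcol : ∀ j, 1 ≤ j → j ≤ n → ∀ b : ℕ, 1 ≤ b → b ≤ m →
      |∑ i ∈ Finset.Icc 1 b, (T i j - F i j)| < 1)
    (N : ℕ → ℕ → ℕ)
    (hN : ∀ i d, 1 ≤ i → i ≤ m → 1 ≤ d → d ≤ n - s i →
      1 ≤ N i d ∧ N i d ≤ n ∧ F i (N i d) = 0 ∧
      ((Finset.Icc 1 (N i d)).filter (fun j => F i j = 0)).card = d)
    (r s' d e : ℕ) (hr1 : 1 ≤ r) (hrm : r ≤ m) (hs1 : 1 ≤ s') (hsm : s' ≤ m)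
    (hd : 1 ≤ d) (hde : d + e ≤ n - s r) (hd2 : d ≤ n - s s') :
    (N r (d + e) : ℤ) - (N s' d : ℤ) ≤ 2 * e + 4 :=
  stmt17_general m n k hkn s hs T F hT hF01 hrow N hN r s' d e hr1 hrm hs1 hsm hd hde hd2
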